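/- arXiv:2512.19096 — 7 statements merged into one kernel-verified Lean document; each statement's English description precedes it below -/
import Mathlib

section
/- Let 𝒰 be a real vector space, let (V_acc, V_des) be a background on 𝒰, and let M_acc, M_des ⊆ 𝒰 be sets with M_des ⊆ M_acc. Then the following are equivalent: (a) V_acc ⊆ M_acc, V_des ⊆ M_des, 0 ∉ M_des, M_acc is a convex cone, and shull(M_des) + M_acc ⊆ M_des; (b) V_acc ⊆ M_acc, V_des ⊆ M_des, 0 ∉ M_des, both M_acc and M_des are convex cones, and M_acc + M_des ⊆ M_des. Moreover, each of these conditions implies that 0 ∉ V_des + M_acc. -/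
open Pointwise

/-- `posi S`: all strictly positive finite linear combinations of elements of `S`. -/
def posi {V : Type*} [AddCommGroup V] [Module ℝ V] (S : Set V) : Set V :=
  {u | ∃ n : ℕ, 0 < n ∧ ∃ (lam : Fin n → ℝ) (w : Fin n → V),
    (∀ k, 0 < lam k) ∧ (∀ k, w k ∈ S) ∧ u = ∑ k, lam k • w k}

/-- `shull S`: all strictly positive scalar multiples of elements of `S`. -/
def shull {V : Type*} [AddCommGroup V] [Module ℝ V] (S : Set V) : Set V :=
  {u | ∃ (lam : ℝ) (w : V), 0 < lam ∧ w ∈ S ∧ u = lam • w}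

lemma mem_posi_self {V : Type*} [AddCommGroup V] [Module ℝ V] {S : Set V} {u : V}
    (h : u ∈ S) : u ∈ posi S := by
  refine ⟨1, one_pos, fun _ => 1, fun _ => u, fun _ => one_pos, fun _ => h, ?_⟩
  simp

theorem stmt0 {U : Type*} [AddCommGroup U] [Module ℝ U]
    (Vacc Vdes : Set U)
    (hV0acc : (0 : U) ∈ Vacc) (hV0des : (0 : U) ∉ Vdes) (hVsub : Vdes ⊆ Vacc)
    (hVaccCone : posi Vacc = Vacc) (hVdesCone : posi Vdes = Vdes)
    (hVadd : Vacc + Vdes ⊆ Vdes)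
    (Macc Mdes : Set U) (hMsub : Mdes ⊆ Macc) :
    ((Vacc ⊆ Macc ∧ Vdes ⊆ Mdes ∧ (0 : U) ∉ Mdes ∧ posi Macc = Macc ∧
        shull Mdes + Macc ⊆ Mdes) ↔
      (Vacc ⊆ Macc ∧ Vdes ⊆ Mdes ∧ (0 : U) ∉ Mdes ∧ posi Macc = Macc ∧
        posi Mdes = Mdes ∧ Macc + Mdes ⊆ Mdes)) ∧
    ((Vacc ⊆ Macc ∧ Vdes ⊆ Mdes ∧ (0 : U) ∉ Mdes ∧ posi Macc = Macc ∧
        shull Mdes + Macc ⊆ Mdes) → (0 : U) ∉ Vdes + Macc) := by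
  constructor
  · constructor
    · rintro ⟨h1, h2, h3, h4, h5⟩
      have h0Macc : (0 : U) ∈ Macc := h1 hV0acc
      refine ⟨h1, h2, h3, h4, ?_, ?_⟩
      · -- posi Mdes = Mdes
        apply Set.Subset.antisymm
        · rintro u ⟨n, hn, lam, w, hlam, hw, rfl⟩
          obtain ⟨m, rfl⟩ := Nat.exists_eq_succ_of_ne_zero hn.ne'
          rw [Fin.sum_univ_succ]
          apply h5
          refine Set.add_mem_add ⟨lam 0, w 0, hlam 0, hw 0, rfl⟩ ?_
          rcases Nat.eq_zero_or_pos m with hm | hm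
          · subst hm; simpa using h0Macc
          · rw [← h4]
            exact ⟨m, hm, fun k => lam k.succ, fun k => w k.succ,
              fun k => hlam _, fun k => hMsub (hw _), rfl⟩
        · exact fun u hu => mem_posi_self hu
      · -- Macc + Mdes ⊆ Mdes
        rintro x hx
        rw [Set.mem_add] at hx
        obtain ⟨a, ha, b, hb, rfl⟩ := hx
        rw [add_comm]
        exact h5 (Set.add_mem_add ⟨1, b, one_pos, hb, (one_smul ℝ b).symm⟩ ha)
    · rintro ⟨h1, h2, h3, h4, h5, h6⟩
      refine ⟨h1, h2, h3, h4, ?_⟩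
      rintro x hx
      rw [Set.mem_add] at hx
      obtain ⟨a, ⟨lam, v, hlam, hv, rfl⟩, b, hb, rfl⟩ := hx
      have : lam • v ∈ Mdes := by
        rw [← h5]
        exact ⟨1, one_pos, fun _ => lam, fun _ => v, fun _ => hlam, fun _ => hv, by simp⟩
      rw [add_comm]
      exact h6 (Set.add_mem_add hb this)
  · rintro ⟨h1, h2, h3, h4, h5⟩ h0
    rw [Set.mem_add] at h0
    obtain ⟨v, hv, m, hm, hvm⟩ := h0
    have : v + m ∈ Mdes :=
      h5 (Set.add_mem_add ⟨1, v, one_pos, h2 hv, (one_smul ℝ v).symm⟩ hm)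
    rw [hvm] at this
    exact h3 this
end

section
/- Let 𝒰 be a real vector space, (V_acc, V_des) a background on 𝒰, (M_acc, M_des) an AD-model respecting this background, and φ : 𝒰 → 𝒰 an event (linear, idempotent, with φ(V_acc) ⊆ V_acc) that is regular (V_des ∩ I_φ = ∅). If moreover 0 ∉ (M_acc⦀φ) + V_des, then posi((M_acc⦀φ) ∪ V_acc) = M_acc⦀φ, and shull((M_des⦀φ) ∪ V_des) ∪ (shull((M_des⦀φ) ∪ V_des) + posi((M_acc⦀φ) ∪ V_acc)) = (M_des⦀φ) ∪ (V_des + (M_acc⦀φ)). -/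
open Pointwise

/-- `condon K φ = K⦀φ`: the options whose called-off version under `φ` lies in `K`. -/
def condon {V : Type*} [AddCommGroup V] [Module ℝ V] (K : Set V) (φ : V →ₗ[ℝ] V) : Set V :=
  {u | φ u ∈ K}

theorem stmt3 {U : Type*} [AddCommGroup U] [Module ℝ U]
    (Vacc Vdes : Set U)
    (hV0acc : (0 : U) ∈ Vacc) (hV0des : (0 : U) ∉ Vdes) (hVsub : Vdes ⊆ Vacc)
    (hVaccCone : posi Vacc = Vacc) (hVdesCone : posi Vdes = Vdes)
    (hVadd : Vacc + Vdes ⊆ Vdes)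
    (Macc Mdes : Set U)
    (hMacc : Vacc ⊆ Macc) (hMdes : Vdes ⊆ Mdes) (hMsub : Mdes ⊆ Macc)
    (hM0 : (0 : U) ∉ Mdes) (hMaccCone : posi Macc = Macc) (hMdesCone : posi Mdes = Mdes)
    (hMadd : Macc + Mdes ⊆ Mdes)
    (φ : U →ₗ[ℝ] U) (hidem : φ ∘ₗ φ = φ) (hmono : ∀ u ∈ Vacc, φ u ∈ Vacc)
    (hreg : Vdes ∩ {u : U | φ u = 0} = ∅)
    (hcond : (0 : U) ∉ condon Macc φ + Vdes) :
    posi (condon Macc φ ∪ Vacc) = condon Macc φ ∧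
    shull (condon Mdes φ ∪ Vdes) ∪
        (shull (condon Mdes φ ∪ Vdes) + posi (condon Macc φ ∪ Vacc)) =
      condon Mdes φ ∪ (Vdes + condon Macc φ) := by
  -- positive scaling closure lemma
  have hscale : ∀ (K : Set U), posi K = K → ∀ u ∈ K, ∀ lam : ℝ, 0 < lam → lam • u ∈ K := by
    intro K hK u hu lam hlam
    rw [← hK]
    exact ⟨1, one_pos, fun _ => lam, fun _ => u, fun _ => hlam, fun _ => hu, by simp⟩
  have h0A : (0 : U) ∈ condon Macc φ := by
    show φ 0 ∈ Macc; simpa using hMacc hV0acc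
  have hposiA : posi (condon Macc φ ∪ Vacc) = condon Macc φ := by
    ext x; constructor
    · rintro ⟨n, hn, lam, w, hpos, hmem, rfl⟩
      show φ (∑ k, lam k • w k) ∈ Macc
      rw [map_sum]
      simp_rw [map_smul]
      rw [← hMaccCone]
      exact ⟨n, hn, lam, fun k => φ (w k), hpos,
        fun k => (hmem k).elim id (fun h => hMacc (hmono _ h)), rfl⟩
    · intro hx
      exact ⟨1, one_pos, fun _ => 1, fun _ => x, fun _ => one_pos, fun _ => Or.inl hx, by simp⟩
  refine ⟨hposiA, ?_⟩
  rw [hposiA]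
  have hDA : ∀ u ∈ condon Mdes φ, ∀ a ∈ condon Macc φ, u + a ∈ condon Mdes φ := by
    intro u hu a ha
    show φ (u + a) ∈ Mdes
    rw [map_add]
    exact hMadd ⟨φ a, ha, φ u, hu, add_comm _ _⟩
  ext x
  constructor
  · rintro (⟨lam, w, hl, hw, rfl⟩ | hx)
    · rcases hw with hw | hw
      · exact Or.inl (hscale _ (by
          ext y; constructor
          · rintro ⟨n, hn, lam', w', hpos, hmem, rfl⟩
            show φ (∑ k, lam' k • w' k) ∈ Mdes
            rw [map_sum]; simp_rw [map_smul]
            rw [← hMdesCone]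
            exact ⟨n, hn, lam', fun k => φ (w' k), hpos, hmem, rfl⟩
          · intro hy
            exact ⟨1, one_pos, fun _ => 1, fun _ => y, fun _ => one_pos, fun _ => hy, by simp⟩)
          w hw lam hl)
      · exact Or.inr ⟨lam • w, hscale _ hVdesCone w hw lam hl, 0, h0A, add_zero _⟩
    · rcases hx with ⟨s, ⟨lam, w, hl, hw, rfl⟩, a, ha, rfl⟩
      rcases hw with hw | hw
      · refine Or.inl (hDA _ ?_ _ ha)
        show φ (lam • w) ∈ Mdes
        rw [map_smul]
        exact hscale _ hMdesCone _ hw lam hl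
      · exact Or.inr ⟨lam • w, hscale _ hVdesCone w hw lam hl, a, ha, rfl⟩
  · rintro (hx | ⟨v, hv, a, ha, rfl⟩)
    · exact Or.inl ⟨1, x, one_pos, Or.inl hx, (one_smul _ _).symm⟩
    · exact Or.inr ⟨v, ⟨1, v, one_pos, Or.inr hv, (one_smul _ _).symm⟩, a, ha, rfl⟩
end

section
/- Let 𝒰 be a real vector space, (V_acc, V_des) a background on 𝒰, (M_acc, M_des) an AD-model respecting this background, and φ : 𝒰 → 𝒰 an event (linear, idempotent, with φ(V_acc) ⊆ V_acc) that is regular (V_des ∩ I_φ = ∅) and such that 0 ∉ (M_acc⦀φ) + V_des. Define N_acc := M_acc⦀φ and N_des := (M_des⦀φ) ∪ (V_des + (M_acc⦀φ)). Then (N_acc, N_des) is again an AD-model respecting the background, i.e. V_acc ⊆ N_acc, V_des ⊆ N_des, N_des ⊆ N_acc, 0 ∉ N_des, N_acc and N_des are convex cones, and N_acc + N_des ⊆ N_des; and moreover I_φ ⊆ N_acc. -/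
open Pointwise

/-! `N_acc` and `M_des⦀φ` are preimages of convex cones under a linear map and `V_des + N_acc`
is a sum of convex cones, so the only real point is that the union `N_des` stays closed under
addition: a mixed sum lands in `M_des⦀φ` because `V_des + N_acc ⊆ N_acc` and
`M_acc + M_des ⊆ M_des`. The hypothesis `0 ∉ N_acc + V_des` is exactly what keeps `0` out of
the second part of `N_des`. -/

section Cone

variable {V W : Type*} [AddCommGroup V] [Module ℝ V] [AddCommGroup W] [Module ℝ W]
  {S T : Set V}

lemma subset_posi : S ⊆ posi S := fun a ha =>
  ⟨1, one_pos, fun _ => 1, fun _ => a, fun _ => one_pos, fun _ => ha, by simp⟩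

lemma posi_eq_self_iff :
    posi S = S ↔ (∀ c : ℝ, 0 < c → ∀ a ∈ S, c • a ∈ S) ∧ S + S ⊆ S := by
  constructor
  · intro h
    rw [← h]
    refine ⟨fun c hc a ha => ?_, ?_⟩
    · obtain ⟨n, hn, lam, w, hlam, hw, rfl⟩ := ha
      refine ⟨n, hn, fun k => c * lam k, w, fun k => mul_pos hc (hlam k), hw, ?_⟩
      simp only [Finset.smul_sum, smul_smul]
    · rintro _ ⟨a, ha, b, hb, rfl⟩
      rw [h] at ha hb
      refine ⟨2, two_pos, fun _ => 1, ![a, b], fun _ => one_pos, ?_, by simp⟩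
      intro k
      fin_cases k <;> assumption
  · rintro ⟨hsmul, hadd⟩
    refine Set.Subset.antisymm ?_ subset_posi
    rintro u ⟨n, hn, lam, w, hlam, hw, rfl⟩
    obtain ⟨m, rfl⟩ := Nat.exists_eq_succ_of_ne_zero hn.ne'
    clear hn
    induction m with
    | zero => simpa using hsmul _ (hlam 0) _ (hw 0)
    | succ m ih =>
      rw [Fin.sum_univ_succ]
      exact hadd (Set.add_mem_add (hsmul _ (hlam 0) _ (hw 0))
        (ih (fun i => lam i.succ) (fun i => w i.succ) (fun i => hlam i.succ)
          (fun i => hw i.succ)))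

lemma add_subset_of_posi_eq_self (hS : posi S = S) : S + S ⊆ S :=
  (posi_eq_self_iff.1 hS).2

lemma posi_add_eq_self (hS : posi S = S) (hT : posi T = T) : posi (S + T) = S + T := by
  obtain ⟨hSsmul, hSadd⟩ := posi_eq_self_iff.1 hS
  obtain ⟨hTsmul, hTadd⟩ := posi_eq_self_iff.1 hT
  refine posi_eq_self_iff.2 ⟨?_, ?_⟩
  · rintro c hc _ ⟨s, hs, t, ht, rfl⟩
    rw [smul_add]
    exact Set.add_mem_add (hSsmul c hc s hs) (hTsmul c hc t ht)
  · calc S + T + (S + T) = (S + S) + (T + T) := add_add_add_comm _ _ _ _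
      _ ⊆ S + T := Set.add_subset_add hSadd hTadd

lemma posi_union_eq_self (hS : posi S = S) (hT : posi T = T) (hST : S + T ⊆ S ∪ T) :
    posi (S ∪ T) = S ∪ T := by
  obtain ⟨hSsmul, hSadd⟩ := posi_eq_self_iff.1 hS
  obtain ⟨hTsmul, hTadd⟩ := posi_eq_self_iff.1 hT
  refine posi_eq_self_iff.2 ⟨?_, ?_⟩
  · rintro c hc a (ha | ha)
    exacts [Or.inl (hSsmul c hc a ha), Or.inr (hTsmul c hc a ha)]
  · rw [Set.union_add, Set.add_union, Set.add_union, add_comm T S]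
    exact Set.union_subset
      (Set.union_subset (hSadd.trans Set.subset_union_left) hST)
      (Set.union_subset hST (hTadd.trans Set.subset_union_right))

lemma posi_preimage_eq_self (f : V →ₗ[ℝ] W) {K : Set W} (hK : posi K = K) :
    posi (f ⁻¹' K) = f ⁻¹' K := by
  obtain ⟨hKsmul, hKadd⟩ := posi_eq_self_iff.1 hK
  refine posi_eq_self_iff.2 ⟨fun c hc a ha => ?_, ?_⟩
  · simpa only [Set.mem_preimage, map_smul] using hKsmul c hc _ ha
  · exact (Set.preimage_add_preimage_subset f).trans (Set.preimage_mono hKadd)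

end Cone

lemma condon_eq_preimage {V : Type*} [AddCommGroup V] [Module ℝ V] (K : Set V)
    (φ : V →ₗ[ℝ] V) : condon K φ = φ ⁻¹' K :=
  rfl

theorem stmt4_general {U : Type*} [AddCommGroup U] [Module ℝ U]
    (Vacc Vdes : Set U)
    (hV0acc : (0 : U) ∈ Vacc) (hVsub : Vdes ⊆ Vacc)
    (hVdesCone : posi Vdes = Vdes)
    (Macc Mdes : Set U)
    (hMacc : Vacc ⊆ Macc) (hMsub : Mdes ⊆ Macc)
    (hM0 : (0 : U) ∉ Mdes) (hMaccCone : posi Macc = Macc) (hMdesCone : posi Mdes = Mdes)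
    (hMadd : Macc + Mdes ⊆ Mdes)
    (φ : U →ₗ[ℝ] U) (hmono : ∀ u ∈ Vacc, φ u ∈ Vacc)
    (hcond : (0 : U) ∉ condon Macc φ + Vdes)
    (Nacc Ndes : Set U)
    (hNacc : Nacc = condon Macc φ)
    (hNdes : Ndes = condon Mdes φ ∪ (Vdes + condon Macc φ)) :
    Vacc ⊆ Nacc ∧ Vdes ⊆ Ndes ∧ Ndes ⊆ Nacc ∧ (0 : U) ∉ Ndes ∧
      posi Nacc = Nacc ∧ posi Ndes = Ndes ∧ Nacc + Ndes ⊆ Ndes ∧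
      {u : U | φ u = 0} ⊆ Nacc := by
  subst hNacc hNdes
  simp only [condon_eq_preimage] at hcond ⊢
  have hNaccCone : posi (φ ⁻¹' Macc) = φ ⁻¹' Macc := posi_preimage_eq_self φ hMaccCone
  have hNaccAdd : φ ⁻¹' Macc + φ ⁻¹' Macc ⊆ φ ⁻¹' Macc := add_subset_of_posi_eq_self hNaccCone
  have hVaccN : Vacc ⊆ φ ⁻¹' Macc := fun u hu => hMacc (hmono u hu)
  have hVdesAddN : Vdes + φ ⁻¹' Macc ⊆ φ ⁻¹' Macc :=
    (Set.add_subset_add_right (hVsub.trans hVaccN)).trans hNaccAdd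
  have hNaccMdes : φ ⁻¹' Macc + φ ⁻¹' Mdes ⊆ φ ⁻¹' Mdes :=
    (Set.preimage_add_preimage_subset φ).trans (Set.preimage_mono hMadd)
  refine ⟨hVaccN, (Set.subset_add_left _ (hVaccN hV0acc)).trans Set.subset_union_right,
    Set.union_subset (Set.preimage_mono hMsub) hVdesAddN, ?_, hNaccCone, ?_, ?_, ?_⟩
  · rintro (h | h)
    · exact hM0 (by simpa using h)
    · exact hcond (by rwa [add_comm])
  · refine posi_union_eq_self (posi_preimage_eq_self φ hMdesCone)
      (posi_add_eq_self hVdesCone hNaccCone) ?_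
    rw [add_comm]
    exact ((Set.add_subset_add_right hVdesAddN).trans hNaccMdes).trans Set.subset_union_left
  · rw [Set.add_union, add_left_comm]
    exact Set.union_subset_union hNaccMdes (Set.add_subset_add_left hNaccAdd)
  · intro u (hu : φ u = 0)
    simpa [hu] using hMacc hV0acc

theorem stmt4 {U : Type*} [AddCommGroup U] [Module ℝ U]
    (Vacc Vdes : Set U)
    (hV0acc : (0 : U) ∈ Vacc) (hV0des : (0 : U) ∉ Vdes) (hVsub : Vdes ⊆ Vacc)
    (hVaccCone : posi Vacc = Vacc) (hVdesCone : posi Vdes = Vdes)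
    (hVadd : Vacc + Vdes ⊆ Vdes)
    (Macc Mdes : Set U)
    (hMacc : Vacc ⊆ Macc) (hMdes : Vdes ⊆ Mdes) (hMsub : Mdes ⊆ Macc)
    (hM0 : (0 : U) ∉ Mdes) (hMaccCone : posi Macc = Macc) (hMdesCone : posi Mdes = Mdes)
    (hMadd : Macc + Mdes ⊆ Mdes)
    (φ : U →ₗ[ℝ] U) (hidem : φ ∘ₗ φ = φ) (hmono : ∀ u ∈ Vacc, φ u ∈ Vacc)
    (hreg : Vdes ∩ {u : U | φ u = 0} = ∅)
    (hcond : (0 : U) ∉ condon Macc φ + Vdes)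
    (Nacc Ndes : Set U)
    (hNacc : Nacc = condon Macc φ)
    (hNdes : Ndes = condon Mdes φ ∪ (Vdes + condon Macc φ)) :
    Vacc ⊆ Nacc ∧ Vdes ⊆ Ndes ∧ Ndes ⊆ Nacc ∧ (0 : U) ∉ Ndes ∧
      posi Nacc = Nacc ∧ posi Ndes = Ndes ∧ Nacc + Ndes ⊆ Ndes ∧
      {u : U | φ u = 0} ⊆ Nacc :=
  stmt4_general Vacc Vdes hV0acc hVsub hVdesCone Macc Mdes hMacc hMsub hM0 hMaccCone hMdesCone hMadd
    φ hmono hcond Nacc Ndes hNacc hNdes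
end

section
/- Let 𝒰 be a real vector space, (V_acc, V_des) a background on 𝒰, (M_acc, M_des) an AD-model respecting this background, and φ : 𝒰 → 𝒰 an event (linear, idempotent, with φ(V_acc) ⊆ V_acc). Then the revised model is included in the expanded model: M_acc⦀φ ⊆ M_acc + I_φ, M_des⦀φ ⊆ M_des + I_φ, and V_des + (M_acc⦀φ) ⊆ M_des + I_φ. -/
open Pointwise

theorem stmt5 {U : Type*} [AddCommGroup U] [Module ℝ U]
    (Vacc Vdes : Set U)
    (hV0acc : (0 : U) ∈ Vacc) (hV0des : (0 : U) ∉ Vdes) (hVsub : Vdes ⊆ Vacc)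
    (hVaccCone : posi Vacc = Vacc) (hVdesCone : posi Vdes = Vdes)
    (hVadd : Vacc + Vdes ⊆ Vdes)
    (Macc Mdes : Set U)
    (hMacc : Vacc ⊆ Macc) (hMdes : Vdes ⊆ Mdes) (hMsub : Mdes ⊆ Macc)
    (hM0 : (0 : U) ∉ Mdes) (hMaccCone : posi Macc = Macc) (hMdesCone : posi Mdes = Mdes)
    (hMadd : Macc + Mdes ⊆ Mdes)
    (φ : U →ₗ[ℝ] U) (hidem : φ ∘ₗ φ = φ) (hmono : ∀ u ∈ Vacc, φ u ∈ Vacc) :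
    condon Macc φ ⊆ Macc + {u : U | φ u = 0} ∧
    condon Mdes φ ⊆ Mdes + {u : U | φ u = 0} ∧
    Vdes + condon Macc φ ⊆ Mdes + {u : U | φ u = 0} := by
  have hker : ∀ u : U, φ (u - φ u) = 0 := by
    intro u
    have := LinearMap.congr_fun hidem u
    simp only [LinearMap.comp_apply] at this
    simp [map_sub, this]
  have hdec : ∀ (K : Set U) (u : U), φ u ∈ K → u ∈ K + {u : U | φ u = 0} := by
    intro K u hu
    exact ⟨φ u, hu, u - φ u, hker u, by module⟩
  refine ⟨fun u hu => hdec _ u hu, fun u hu => hdec _ u hu, ?_⟩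
  rintro x ⟨v, hv, u, hu, rfl⟩
  refine ⟨φ u + v, hMadd ⟨φ u, hu, v, hMdes hv, rfl⟩, (v + u) - (φ u + v), ?_, by module⟩
  have h := hker u
  simp only [map_sub, map_add] at h ⊢
  have := LinearMap.congr_fun hidem u
  simp only [LinearMap.comp_apply] at this
  simp [this]
  abel
end

section
/- Let 𝒰 be a real vector space, (V_acc, V_des) a background on 𝒰, and (M_acc, M_des) an AD-model respecting this background. Let u ∈ V_des be such that for every w ∈ V_des there is some α > 0 with w − α·u ∈ V_acc. Let φ₁, φ₁₂ : 𝒰 → 𝒰 be linear maps with φ₁(V_acc) ⊆ V_acc, φ₁ ∘ φ₁₂ = φ₁₂, and u − φ₁₂(u) ∈ V_acc. If 0 ∉ (M_acc⦀φ₁₂) + V_des, then 0 ∉ (M_acc⦀φ₁) + V_des; in other words, conditionability on the combined event implies conditionability on the first event. -/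
open Pointwise

lemma add_mem_posi {V : Type*} [AddCommGroup V] [Module ℝ V] {S : Set V} {a b : V}
    (ha : a ∈ S) (hb : b ∈ S) : a + b ∈ posi S := by
  refine ⟨2, by norm_num, ![1, 1], ![a, b], ?_, ?_, ?_⟩
  · intro k; fin_cases k <;> norm_num
  · intro k; fin_cases k <;> simpa
  · simp [Fin.sum_univ_two]

lemma smul_mem_posi {V : Type*} [AddCommGroup V] [Module ℝ V] {S : Set V} {a : V} {α : ℝ}
    (hα : 0 < α) (ha : a ∈ S) : α • a ∈ posi S := by
  exact ⟨1, one_pos, fun _ => α, fun _ => a, fun _ => hα, fun _ => ha, by simp⟩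

theorem stmt6 {U : Type*} [AddCommGroup U] [Module ℝ U]
    (Vacc Vdes : Set U)
    (hV0acc : (0 : U) ∈ Vacc) (hV0des : (0 : U) ∉ Vdes) (hVsub : Vdes ⊆ Vacc)
    (hVaccCone : posi Vacc = Vacc) (hVdesCone : posi Vdes = Vdes)
    (hVadd : Vacc + Vdes ⊆ Vdes)
    (Macc Mdes : Set U)
    (hMacc : Vacc ⊆ Macc) (hMdes : Vdes ⊆ Mdes) (hMsub : Mdes ⊆ Macc)
    (hM0 : (0 : U) ∉ Mdes) (hMaccCone : posi Macc = Macc) (hMdesCone : posi Mdes = Mdes)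
    (hMadd : Macc + Mdes ⊆ Mdes)
    (u : U) (hu : u ∈ Vdes)
    (hunit : ∀ w ∈ Vdes, ∃ α : ℝ, 0 < α ∧ w - α • u ∈ Vacc)
    (φ₁ φ₁₂ : U →ₗ[ℝ] U)
    (hmono₁ : ∀ w ∈ Vacc, φ₁ w ∈ Vacc)
    (hcomp : φ₁ ∘ₗ φ₁₂ = φ₁₂)
    (huφ : u - φ₁₂ u ∈ Vacc) :
    (0 : U) ∉ condon Macc φ₁₂ + Vdes → (0 : U) ∉ condon Macc φ₁ + Vdes := by
  intro h12 h1
  obtain ⟨m, hm, w, hw, hmw⟩ := h1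
  obtain ⟨α, hα, hwa⟩ := hunit w hw
  apply h12
  refine ⟨(-α) • u, ?_, α • u, ?_, by simp [neg_smul, add_comm]⟩
  · -- φ₁₂ ((-α) • u) ∈ Macc
    have key : φ₁₂ ((-α) • u) = m + (w - α • u) + α • (u - φ₁₂ u) := by
      have hm' : m = -w := eq_neg_of_add_eq_zero_left hmw
      rw [map_smul, hm']
      module
    have key2 : φ₁₂ ((-α) • u) = φ₁ (φ₁₂ ((-α) • u)) := by
      have := congrFun (congrArg DFunLike.coe hcomp) ((-α) • u)
      simpa using this.symm
    show φ₁₂ ((-α) • u) ∈ Macc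
    rw [key2, key, map_add, map_add]
    have h1' : φ₁ (w - α • u) ∈ Vacc := hmono₁ _ hwa
    have h2' : φ₁ (α • (u - φ₁₂ u)) ∈ Vacc := by
      rw [map_smul]
      rw [← hVaccCone]
      exact smul_mem_posi hα (hmono₁ _ huφ)
    have hsum : φ₁ m + φ₁ (w - α • u) ∈ Macc := by
      rw [← hMaccCone]
      exact add_mem_posi hm (hMacc h1')
    rw [← hMaccCone]
    exact add_mem_posi (hMaccCone ▸ hsum) (hMacc h2')
  · rw [← hVdesCone]; exact smul_mem_posi hα hu
end

section
/- Let Ω be a nonempty set, let ℱ be a proper filter on Ω, and let E ⊆ Ω be nonempty with B ∩ E ≠ ∅ for every B ∈ ℱ. Set ℱ' := {B ⊆ Ω : ∃D ∈ ℱ, D ∩ E ⊆ B}. Then 𝒢≥0^ℱ + I_E = 𝒢≥0^{ℱ'} and 𝒢>0^ℱ + I_E = 𝒢>0^{ℱ'}. -/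
open Pointwise

/-- The set of gambles on `Ω`: the bounded real-valued functions. -/
def Gmb (Ω : Type*) : Set (Ω → ℝ) := {f | ∃ M : ℝ, ∀ ω, |f ω| ≤ M}

/-- `𝒢≥0^ℱ`: the gambles that are nonnegative on some member of `ℱ`. -/
def GgeF {Ω : Type*} (F : Set (Set Ω)) : Set (Ω → ℝ) :=
  {f | f ∈ Gmb Ω ∧ ∃ B ∈ F, ∀ ω ∈ B, 0 ≤ f ω}

/-- `𝒢>0^ℱ`: the gambles uniformly positive on some member of `ℱ`. -/
def GgtF {Ω : Type*} (F : Set (Set Ω)) : Set (Ω → ℝ) :=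
  {f | f ∈ Gmb Ω ∧ ∃ B ∈ F, ∃ ε > 0, ∀ ω ∈ B, ε ≤ f ω}

/-- `I_E`: the gambles vanishing on `E`. -/
def IE {Ω : Type*} (E : Set Ω) : Set (Ω → ℝ) :=
  {f | f ∈ Gmb Ω ∧ ∀ ω ∈ E, f ω = 0}

theorem stmt11 {Ω : Type*} [Nonempty Ω] (F : Set (Set Ω))
    (hne : F.Nonempty)
    (hinter : ∀ A ∈ F, ∀ B ∈ F, A ∩ B ∈ F)
    (hsup : ∀ A ∈ F, ∀ B : Set Ω, A ⊆ B → B ∈ F)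
    (hproper : (∅ : Set Ω) ∉ F)
    (E : Set Ω) (hE : E.Nonempty)
    (hcons : ∀ B ∈ F, (B ∩ E).Nonempty)
    (F' : Set (Set Ω)) (hF' : F' = {B : Set Ω | ∃ D ∈ F, D ∩ E ⊆ B}) :
    GgeF F + IE E = GgeF F' ∧ GgtF F + IE E = GgtF F' := by
  classical
  subst hF'
  constructor
  · ext h
    constructor
    · rintro ⟨f, ⟨⟨M, hM⟩, B, hB, hf⟩, g, ⟨⟨N, hN⟩, hg⟩, rfl⟩
      refine ⟨⟨M + N, fun ω => ?_⟩, B ∩ E, ⟨B, hB, subset_rfl⟩, fun ω hω => ?_⟩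
      · calc |(f + g) ω| ≤ |f ω| + |g ω| := abs_add_le _ _
          _ ≤ M + N := add_le_add (hM ω) (hN ω)
      · have := hg ω hω.2
        have := hf ω hω.1
        simp only [Pi.add_apply]
        linarith
    · rintro ⟨⟨M, hM⟩, B, ⟨D, hD, hDE⟩, hh⟩
      have hM0 : 0 ≤ M := le_trans (abs_nonneg _) (hM (Classical.arbitrary Ω))
      set f : Ω → ℝ := fun ω => if ω ∈ E then h ω else max (h ω) 0 with hfdef
      refine ⟨f, ⟨⟨M, fun ω => ?_⟩, D, hD, fun ω hω => ?_⟩,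
        h - f, ⟨⟨2 * M, fun ω => ?_⟩, fun ω hω => ?_⟩, by ring⟩
      · simp only [hfdef]
        split
        · exact hM ω
        · rw [abs_le]
          constructor
          · exact le_trans (by linarith) (le_max_right _ _)
          · exact max_le (le_trans (le_abs_self _) (hM ω)) hM0
      · simp only [hfdef]
        split
        · exact hh ω (hDE ⟨hω, by assumption⟩)
        · exact le_max_right _ _
      · have h1 : |f ω| ≤ M := by
          simp only [hfdef]
          split
          · exact hM ω
          · rw [abs_le]
            constructor
            · exact le_trans (by linarith) (le_max_right _ _)
            · exact max_le (le_trans (le_abs_self _) (hM ω)) hM0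
        calc |(h - f) ω| ≤ |h ω| + |f ω| := abs_sub _ _
          _ ≤ 2 * M := by linarith [hM ω]
      · simp only [Pi.sub_apply, hfdef, if_pos hω, sub_self]
  · ext h
    constructor
    · rintro ⟨f, ⟨⟨M, hM⟩, B, hB, ε, hε, hf⟩, g, ⟨⟨N, hN⟩, hg⟩, rfl⟩
      refine ⟨⟨M + N, fun ω => ?_⟩, B ∩ E, ⟨B, hB, subset_rfl⟩, ε, hε, fun ω hω => ?_⟩
      · calc |(f + g) ω| ≤ |f ω| + |g ω| := abs_add_le _ _
          _ ≤ M + N := add_le_add (hM ω) (hN ω)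
      · have := hg ω hω.2
        have := hf ω hω.1
        simp only [Pi.add_apply]
        linarith
    · rintro ⟨⟨M, hM⟩, B, ⟨D, hD, hDE⟩, ε, hε, hh⟩
      have hεM : ε ≤ M := by
        obtain ⟨ω, hω⟩ := hcons D hD
        exact le_trans (hh ω (hDE hω)) (le_trans (le_abs_self _) (hM ω))
      set f : Ω → ℝ := fun ω => if ω ∈ E then h ω else max (h ω) ε with hfdef
      have h1 : ∀ ω, |f ω| ≤ M := by
        intro ω
        simp only [hfdef]
        split
        · exact hM ω
        · rw [abs_le]
          constructor
          · exact le_trans (by linarith [abs_nonneg (h ω), hM ω]) (le_max_right _ _)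
          · exact max_le (le_trans (le_abs_self _) (hM ω)) hεM
      refine ⟨f, ⟨⟨M, h1⟩, D, hD, ε, hε, fun ω hω => ?_⟩,
        h - f, ⟨⟨2 * M, fun ω => ?_⟩, fun ω hω => ?_⟩, by ring⟩
      · simp only [hfdef]
        split
        · exact hh ω (hDE ⟨hω, by assumption⟩)
        · exact le_max_right _ _
      · calc |(h - f) ω| ≤ |h ω| + |f ω| := abs_sub _ _
          _ ≤ 2 * M := by linarith [hM ω, h1 ω]
      · simp only [Pi.sub_apply, hfdef, if_pos hω, sub_self]
end

section
/- Let H be a finite-dimensional complex inner product space, let U₁ and U₂ be linear subspaces of H, and let P₁, P₂ and P denote the orthogonal projections of H onto U₁, U₂ and U₁ ∩ U₂ respectively, regarded as linear maps H → H. Then, as subsets of the Hermitian linear maps on H and with Minkowski sum, {A Hermitian : P ∘ A ∘ P = 0} = {B Hermitian : P₁ ∘ B ∘ P₁ = 0} + {C Hermitian : P₂ ∘ C ∘ P₂ = 0}; in particular, every Hermitian A with P A P = 0 can be written as A = B + C with B, C Hermitian, P₁ B P₁ = 0 and P₂ C P₂ = 0. -/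
/-!
Write `P₁, P₂, P` for the projections onto `U₁, U₂, U₁ ⊓ U₂`. As `1 - P` vanishes on
`U₁ ⊓ U₂`, the maps `1 - P` on `U₁` and `0` on `U₂` glue to an operator `T` on `H`, so that
`T P₂ = 0` and `T P₁ = P₁ - P`. Given a Hermitian `A` with `P A P = 0`, the
Hermitian operator `C = T* A T + P A T + T* A P` satisfies `P₂ C P₂ = 0` and
`P₁ C P₁ = P₁ A P₁ - P A P = P₁ A P₁`, so `A = (A - C) + C` is the required decomposition.
The reverse inclusion holds because `P ≤ P₁` and `P ≤ P₂`.
-/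

open Pointwise

/-- The orthogonal projection onto a subspace `U`, regarded as a linear map `H → H`. -/
noncomputable def projOn {H : Type*} [NormedAddCommGroup H] [InnerProductSpace ℂ H]
    [FiniteDimensional ℂ H] (U : Submodule ℂ H) : H →ₗ[ℂ] H :=
  U.subtype ∘ₗ (U.orthogonalProjectionOnto : H →L[ℂ] U).toLinearMap

section StarRing

variable {R : Type*} [Ring R] [StarRing R] {p p₁ : R}

theorem IsSelfAdjoint.mul_eq_right_of_mul_eq_left (hp : IsSelfAdjoint p)
    (hp₁ : IsSelfAdjoint p₁) (h : p * p₁ = p) : p₁ * p = p := by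
  simpa only [star_mul, hp.star_eq, hp₁.star_eq] using congrArg star h

theorem IsSelfAdjoint.mul_mul_eq_zero_of_mul_eq (hp : IsSelfAdjoint p) (hp₁ : IsSelfAdjoint p₁)
    (h : p * p₁ = p) {b : R} (hb : p₁ * b * p₁ = 0) : p * b * p = 0 :=
  calc p * b * p = (p * p₁) * b * (p₁ * p) := by
        rw [h, hp.mul_eq_right_of_mul_eq_left hp₁ h]
    _ = p * (p₁ * b * p₁) * p := by noncomm_ring
    _ = 0 := by rw [hb, mul_zero, zero_mul]

theorem IsSelfAdjoint.exists_add_of_mul_mul_eq_zero {p₂ t a : R} (hp : IsSelfAdjoint p)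
    (hp₁ : IsSelfAdjoint p₁) (hp₂ : IsSelfAdjoint p₂) (hpp₁ : p * p₁ = p)
    (htp₂ : t * p₂ = 0) (htp₁ : t * p₁ = p₁ - p) (ha : IsSelfAdjoint a) (hpap : p * a * p = 0) :
    ∃ b c : R, IsSelfAdjoint b ∧ IsSelfAdjoint c ∧ p₁ * b * p₁ = 0 ∧ p₂ * c * p₂ = 0 ∧
      a = b + c := by
  have hp₂t : p₂ * star t = 0 := by
    simpa only [star_mul, hp₂.star_eq, star_zero] using congrArg star htp₂
  have hp₁t : p₁ * star t = p₁ - p := by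
    simpa only [star_mul, star_sub, hp₁.star_eq, hp.star_eq] using congrArg star htp₁
  have hp₁p : p₁ * p = p := hp.mul_eq_right_of_mul_eq_left hp₁ hpp₁
  set c := star t * a * t + (p * a * t + star (p * a * t)) with hc
  have hc_sa : IsSelfAdjoint c := (ha.conjugate' t).add (.add_star_self _)
  have hc₂ : p₂ * c * p₂ = 0 := by
    calc p₂ * c * p₂ = (p₂ * star t) * a * (t * p₂) + (p₂ * p) * a * (t * p₂)
          + (p₂ * star t) * a * (p * p₂) := by
          simp only [hc, star_mul, ha.star_eq, hp.star_eq]; noncomm_ring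
      _ = 0 := by rw [hp₂t, htp₂]; noncomm_ring
  have hc₁ : p₁ * c * p₁ = p₁ * a * p₁ := by
    calc p₁ * c * p₁ = (p₁ * star t) * a * (t * p₁) + (p₁ * p) * a * (t * p₁)
          + (p₁ * star t) * a * (p * p₁) := by
          simp only [hc, star_mul, ha.star_eq, hp.star_eq]; noncomm_ring
      _ = (p₁ - p) * a * (p₁ - p) + p * a * (p₁ - p) + (p₁ - p) * a * p := by
          rw [hp₁t, htp₁, hp₁p, hpp₁]
      _ = p₁ * a * p₁ - p * a * p := by noncomm_ring
      _ = p₁ * a * p₁ := by rw [hpap, sub_zero]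
  refine ⟨a - c, c, ha.sub hc_sa, hc_sa, ?_, hc₂, (sub_add_cancel a c).symm⟩
  rw [mul_sub, sub_mul, hc₁, sub_self]

end StarRing

theorem LinearMap.exists_eqOn_eqOn_of_eqOn_inf {K V V' : Type*} [DivisionRing K]
    [AddCommGroup V] [Module K V] [AddCommGroup V'] [Module K V'] {p q : Submodule K V}
    (f g : V →ₗ[K] V') (h : ∀ x ∈ p ⊓ q, f x = g x) :
    ∃ e : V →ₗ[K] V', (∀ x ∈ p, e x = f x) ∧ ∀ x ∈ q, e x = g x := by
  let F : V →ₗ.[K] V' := ⟨p, f ∘ₗ p.subtype⟩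
  let G : V →ₗ.[K] V' := ⟨q, g ∘ₗ q.subtype⟩
  have hFG : ∀ (x : F.domain) (y : G.domain), (x : V) = y → F x = G y := by
    rintro ⟨x, hx⟩ ⟨y, hy⟩ (rfl : x = y)
    exact h x ⟨hx, hy⟩
  obtain ⟨e, he⟩ := LinearMap.exists_extend (F.sup G hFG).toFun
  refine ⟨e, fun x hx => ?_, fun x hx => ?_⟩
  · obtain ⟨hle, hF⟩ := F.left_le_sup G hFG
    exact (LinearMap.congr_fun he ⟨x, hle hx⟩).trans (hF (x := ⟨x, hx⟩) rfl).symm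
  · obtain ⟨hle, hG⟩ := F.right_le_sup G hFG
    exact (LinearMap.congr_fun he ⟨x, hle hx⟩).trans (hG (x := ⟨x, hx⟩) rfl).symm

section Projection

variable {H : Type*} [NormedAddCommGroup H] [InnerProductSpace ℂ H] [FiniteDimensional ℂ H]

theorem projOn_apply_mem (U : Submodule ℂ H) (x : H) : projOn U x ∈ U :=
  U.starProjection_apply_mem x

theorem projOn_apply_of_mem {U : Submodule ℂ H} {x : H} (hx : x ∈ U) : projOn U x = x :=
  Submodule.starProjection_eq_self_iff.2 hx

theorem isSelfAdjoint_projOn (U : Submodule ℂ H) : IsSelfAdjoint (projOn U) :=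
  (LinearMap.isSymmetric_iff_isSelfAdjoint _).1 U.starProjection_isSymmetric

theorem projOn_mul_projOn_of_le {U V : Submodule ℂ H} (h : U ≤ V) :
    projOn U * projOn V = projOn U :=
  congrArg ContinuousLinearMap.toLinearMap (Submodule.starProjection_comp_starProjection_of_le h)

theorem exists_mul_projOn_eq_zero_mul_projOn_eq_sub (U₁ U₂ : Submodule ℂ H) :
    ∃ T : H →ₗ[ℂ] H, T * projOn U₂ = 0 ∧ T * projOn U₁ = projOn U₁ - projOn (U₁ ⊓ U₂) := by
  obtain ⟨T, hT₁, hT₂⟩ := LinearMap.exists_eqOn_eqOn_of_eqOn_inf (p := U₁) (q := U₂)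
    (LinearMap.id - projOn (U₁ ⊓ U₂)) 0 fun x hx => by
      simp [projOn_apply_of_mem hx]
  refine ⟨T, LinearMap.ext fun x => hT₂ _ (projOn_apply_mem U₂ x), LinearMap.ext fun x => ?_⟩
  calc T (projOn U₁ x) = projOn U₁ x - projOn (U₁ ⊓ U₂) (projOn U₁ x) :=
        hT₁ _ (projOn_apply_mem U₁ x)
    _ = projOn U₁ x - projOn (U₁ ⊓ U₂) x := by
        rw [← Module.End.mul_apply, projOn_mul_projOn_of_le inf_le_left]

end Projection

theorem LinearMap.comp_comp_eq_mul_mul {R M : Type*} [Semiring R] [AddCommMonoid M] [Module R M]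
    (f g h : Module.End R M) : f ∘ₗ g ∘ₗ h = f * g * h :=
  (mul_assoc f g h).symm

theorem stmt19 {H : Type*} [NormedAddCommGroup H] [InnerProductSpace ℂ H]
    [FiniteDimensional ℂ H] (U₁ U₂ : Submodule ℂ H) :
    ({A : H →ₗ[ℂ] H | A.IsSymmetric ∧
        projOn (U₁ ⊓ U₂) ∘ₗ A ∘ₗ projOn (U₁ ⊓ U₂) = 0} =
      {B : H →ₗ[ℂ] H | B.IsSymmetric ∧ projOn U₁ ∘ₗ B ∘ₗ projOn U₁ = 0} +
        {C : H →ₗ[ℂ] H | C.IsSymmetric ∧ projOn U₂ ∘ₗ C ∘ₗ projOn U₂ = 0}) ∧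
    ∀ A : H →ₗ[ℂ] H, A.IsSymmetric →
      projOn (U₁ ⊓ U₂) ∘ₗ A ∘ₗ projOn (U₁ ⊓ U₂) = 0 →
      ∃ B C : H →ₗ[ℂ] H, B.IsSymmetric ∧ C.IsSymmetric ∧
        projOn U₁ ∘ₗ B ∘ₗ projOn U₁ = 0 ∧ projOn U₂ ∘ₗ C ∘ₗ projOn U₂ = 0 ∧
        A = B + C := by
  simp only [LinearMap.isSymmetric_iff_isSelfAdjoint, LinearMap.comp_comp_eq_mul_mul]
  have hP := isSelfAdjoint_projOn (U₁ ⊓ U₂)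
  have decompose : ∀ A : H →ₗ[ℂ] H, IsSelfAdjoint A →
      projOn (U₁ ⊓ U₂) * A * projOn (U₁ ⊓ U₂) = 0 →
      ∃ B C : H →ₗ[ℂ] H, IsSelfAdjoint B ∧ IsSelfAdjoint C ∧
        projOn U₁ * B * projOn U₁ = 0 ∧ projOn U₂ * C * projOn U₂ = 0 ∧ A = B + C := by
    obtain ⟨T, hT₂, hT₁⟩ := exists_mul_projOn_eq_zero_mul_projOn_eq_sub U₁ U₂
    exact fun A hA hA0 => hP.exists_add_of_mul_mul_eq_zero (isSelfAdjoint_projOn U₁)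
      (isSelfAdjoint_projOn U₂) (projOn_mul_projOn_of_le inf_le_left) hT₂ hT₁ hA hA0
  refine ⟨Set.ext fun A => ⟨fun ⟨hA, hA0⟩ => ?_, ?_⟩, decompose⟩
  · obtain ⟨B, C, hB, hC, hB0, hC0, rfl⟩ := decompose A hA hA0
    exact ⟨B, ⟨hB, hB0⟩, C, ⟨hC, hC0⟩, rfl⟩
  · rintro ⟨B, ⟨hB, hB0⟩, C, ⟨hC, hC0⟩, rfl⟩
    refine ⟨hB.add hC, ?_⟩
    rw [mul_add, add_mul,
      hP.mul_mul_eq_zero_of_mul_eq (isSelfAdjoint_projOn U₁)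
        (projOn_mul_projOn_of_le inf_le_left) hB0,
      hP.mul_mul_eq_zero_of_mul_eq (isSelfAdjoint_projOn U₂)
        (projOn_mul_projOn_of_le inf_le_right) hC0, add_zero]
end
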